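/- Let r_n, s_n be real sequences with s_n > 0 for all n ≥ 1, such that the power series R(x) = ∑_{n≥1} r_n xⁿ and S(x) = ∑_{n≥1} s_n xⁿ converge for |x| < 1. If n ↦ r_n/s_n is strictly increasing, then R/S is strictly increasing on (0,1). -/
import Mathlib


open Set

/-- Absolute summability on `[0,1)` from summability on `(-1,1)`. -/
lemma bk_abs_summable (r : ℕ → ℝ)
    (hR : ∀ x : ℝ, |x| < 1 → Summable fun n : ℕ => r (n + 1) * x ^ (n + 1))
    {x : ℝ} (hx0 : 0 ≤ x) (hx1 : x < 1) :
    Summable fun n : ℕ => ‖r (n + 1) * x ^ (n + 1)‖ := by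
  set t : ℝ := (x + 1) / 2 with ht
  have htpos : 0 < t := by rw [ht]; linarith
  have hxt : x < t := by rw [ht]; linarith
  have ht1 : t < 1 := by rw [ht]; linarith
  have hsum := hR t (by rw [abs_of_pos htpos]; exact ht1)
  have hb : BddAbove (Set.range fun n : ℕ => |r (n + 1) * t ^ (n + 1)|) := by
    have := (hsum.tendsto_atTop_zero.abs)
    simpa using this.bddAbove_range
  obtain ⟨C, hC⟩ := hb
  have hCn : ∀ n : ℕ, |r (n + 1) * t ^ (n + 1)| ≤ C := fun n =>
    hC (Set.mem_range_self n)
  have hratio0 : 0 ≤ x / t := div_nonneg hx0 htpos.le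
  have hratio1 : x / t < 1 := (div_lt_one htpos).mpr hxt
  refine Summable.of_nonneg_of_le (fun n => norm_nonneg _) (fun n => ?_)
    ((summable_geometric_of_lt_one hratio0 hratio1).mul_left (C * (x / t)))
  · 
    have hxeq : x ^ (n + 1) = t ^ (n + 1) * (x / t) ^ (n + 1) := by
      rw [← mul_pow, mul_div_cancel₀ _ htpos.ne']
    have h1 : ‖r (n + 1) * x ^ (n + 1)‖
        = |r (n + 1) * t ^ (n + 1)| * (x / t) ^ (n + 1) := by
      rw [Real.norm_eq_abs, hxeq, ← mul_assoc, abs_mul,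
        abs_of_nonneg (pow_nonneg hratio0 _)]
    rw [h1]
    calc |r (n + 1) * t ^ (n + 1)| * (x / t) ^ (n + 1)
        ≤ C * (x / t) ^ (n + 1) :=
          mul_le_mul_of_nonneg_right (hCn n) (pow_nonneg hratio0 _)
      _ = C * (x / t) * (x / t) ^ n := by ring

/-- Cross term positivity. -/
lemma bk_cross_pos {x y : ℝ} (hx : 0 < x) (hxy : x < y) {m n : ℕ} (hmn : m < n) :
    0 < x ^ (m + 1) * y ^ (n + 1) - x ^ (n + 1) * y ^ (m + 1) := by
  have hy : 0 < y := hx.trans hxy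
  have hk : n + 1 = (m + 1) + (n - m) := by omega
  have hpow : x ^ (n - m) < y ^ (n - m) :=
    pow_lt_pow_left₀ hxy hx.le (by omega)
  have hk' : m + 1 + (n - m) = n + 1 := by omega
  have e1 : x ^ (n + 1) = x ^ (m + 1) * x ^ (n - m) := by
    rw [← hk', pow_add]
  have e2 : y ^ (n + 1) = y ^ (m + 1) * y ^ (n - m) := by
    rw [← hk', pow_add]
  have : x ^ (n + 1) * y ^ (m + 1) < x ^ (m + 1) * y ^ (n + 1) := by
    rw [e1, e2]
    nlinarith [mul_pos (mul_pos (pow_pos hx (m + 1)) (pow_pos hy (m + 1)))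
      (sub_pos.mpr hpow)]
  linarith

set_option maxHeartbeats 1000000 in
theorem biernacki_krzyz (r s : ℕ → ℝ) (hs : ∀ n, 1 ≤ n → 0 < s n)
    (hR : ∀ x : ℝ, |x| < 1 → Summable fun n : ℕ => r (n + 1) * x ^ (n + 1))
    (hS : ∀ x : ℝ, |x| < 1 → Summable fun n : ℕ => s (n + 1) * x ^ (n + 1))
    (hmono : StrictMono fun n : ℕ => r (n + 1) / s (n + 1)) :
    StrictMonoOn
      (fun x : ℝ => (∑' n : ℕ, r (n + 1) * x ^ (n + 1)) / ∑' n : ℕ, s (n + 1) * x ^ (n + 1))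
      (Set.Ioo 0 1) := by
  have hsp : ∀ n : ℕ, 0 < s (n + 1) := fun n => hs (n + 1) (by omega)
  have key : ∀ a b : ℕ, a < b → r (a + 1) * s (b + 1) < r (b + 1) * s (a + 1) := by
    intro a b hab
    have := hmono hab
    simp only at this
    exact (div_lt_div_iff₀ (hsp a) (hsp b)).mp this
  -- main pointwise sign lemma
  have hsign : ∀ {x y : ℝ}, 0 < x → x < y → ∀ m n : ℕ,
      0 ≤ (r (n + 1) * s (m + 1) - r (m + 1) * s (n + 1)) *
        (x ^ (m + 1) * y ^ (n + 1) - x ^ (n + 1) * y ^ (m + 1)) := by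
    intro x y hx hxy m n
    rcases lt_trichotomy m n with h | h | h
    · exact le_of_lt (mul_pos (by linarith [key m n h]) (bk_cross_pos hx hxy h))
    · subst h; simp
    · have h1 := key n m h
      have h2 := bk_cross_pos hx hxy h
      nlinarith
  intro x hx y hy hxy
  obtain ⟨hx0, hx1⟩ := hx
  obtain ⟨hy0, hy1⟩ := hy
  have hxabs : |x| < 1 := by rw [abs_of_pos hx0]; exact hx1
  have hyabs : |y| < 1 := by rw [abs_of_pos hy0]; exact hy1
  -- summability
  have hRx : Summable fun n : ℕ => ‖r (n + 1) * x ^ (n + 1)‖ :=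
    bk_abs_summable r hR hx0.le hx1
  have hRy : Summable fun n : ℕ => ‖r (n + 1) * y ^ (n + 1)‖ :=
    bk_abs_summable r hR hy0.le hy1
  have hSx : Summable fun n : ℕ => ‖s (n + 1) * x ^ (n + 1)‖ :=
    bk_abs_summable s hS hx0.le hx1
  have hSy : Summable fun n : ℕ => ‖s (n + 1) * y ^ (n + 1)‖ :=
    bk_abs_summable s hS hy0.le hy1
  -- positivity of denominators
  have hSxpos : 0 < ∑' n : ℕ, s (n + 1) * x ^ (n + 1) :=
    Summable.tsum_pos (hS x hxabs) (fun n => (mul_pos (hsp n) (pow_pos hx0 _)).le) 0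
      (mul_pos (hsp 0) (pow_pos hx0 _))
  have hSypos : 0 < ∑' n : ℕ, s (n + 1) * y ^ (n + 1) :=
    Summable.tsum_pos (hS y hyabs) (fun n => (mul_pos (hsp n) (pow_pos hy0 _)).le) 0
      (mul_pos (hsp 0) (pow_pos hy0 _))
  simp only
  rw [div_lt_div_iff₀ hSxpos hSypos]
  -- products as double sums
  have h1 : (∑' n : ℕ, r (n + 1) * x ^ (n + 1)) * ∑' n : ℕ, s (n + 1) * y ^ (n + 1)
      = ∑' p : ℕ × ℕ, (r (p.1 + 1) * x ^ (p.1 + 1)) * (s (p.2 + 1) * y ^ (p.2 + 1)) :=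
    tsum_mul_tsum_of_summable_norm (f := fun n : ℕ => r (n + 1) * x ^ (n + 1))
      (g := fun n : ℕ => s (n + 1) * y ^ (n + 1)) hRx hSy
  have h2 : (∑' n : ℕ, r (n + 1) * y ^ (n + 1)) * ∑' n : ℕ, s (n + 1) * x ^ (n + 1)
      = ∑' p : ℕ × ℕ, (r (p.1 + 1) * y ^ (p.1 + 1)) * (s (p.2 + 1) * x ^ (p.2 + 1)) :=
    tsum_mul_tsum_of_summable_norm (f := fun n : ℕ => r (n + 1) * y ^ (n + 1))
      (g := fun n : ℕ => s (n + 1) * x ^ (n + 1)) hRy hSx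
  have hs1 : Summable fun p : ℕ × ℕ =>
      (r (p.1 + 1) * x ^ (p.1 + 1)) * (s (p.2 + 1) * y ^ (p.2 + 1)) :=
    summable_mul_of_summable_norm (f := fun n : ℕ => r (n + 1) * x ^ (n + 1))
      (g := fun n : ℕ => s (n + 1) * y ^ (n + 1)) hRx hSy
  have hs2 : Summable fun p : ℕ × ℕ =>
      (r (p.1 + 1) * y ^ (p.1 + 1)) * (s (p.2 + 1) * x ^ (p.2 + 1)) :=
    summable_mul_of_summable_norm (f := fun n : ℕ => r (n + 1) * y ^ (n + 1))
      (g := fun n : ℕ => s (n + 1) * x ^ (n + 1)) hRy hSx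
  set H : ℕ × ℕ → ℝ := fun p =>
    (r (p.1 + 1) * y ^ (p.1 + 1)) * (s (p.2 + 1) * x ^ (p.2 + 1)) -
    (r (p.1 + 1) * x ^ (p.1 + 1)) * (s (p.2 + 1) * y ^ (p.2 + 1)) with hH
  have hHsum : Summable H := hs2.sub hs1
  have hHswap : Summable fun p : ℕ × ℕ => H p.swap := by
    exact ((Equiv.prodComm ℕ ℕ).summable_iff (f := H)).mpr hHsum
  have hswap_eq : ∑' p : ℕ × ℕ, H p.swap = ∑' p : ℕ × ℕ, H p :=
    (Equiv.prodComm ℕ ℕ).tsum_eq H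
  have hKeq : ∀ p : ℕ × ℕ, H p + H p.swap =
      (r (p.2 + 1) * s (p.1 + 1) - r (p.1 + 1) * s (p.2 + 1)) *
        (x ^ (p.1 + 1) * y ^ (p.2 + 1) - x ^ (p.2 + 1) * y ^ (p.1 + 1)) := by
    intro p
    simp only [hH, Prod.fst_swap, Prod.snd_swap]
    ring
  have hKpos : 0 < ∑' p : ℕ × ℕ, (H p + H p.swap) := by
    apply Summable.tsum_pos (hHsum.add hHswap) _ ((0 : ℕ), (1 : ℕ))
    · rw [hKeq]
      exact mul_pos (by linarith [key 0 1 (by norm_num)])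
        (bk_cross_pos hx0 hxy (by norm_num))
    · intro p
      rw [hKeq]
      exact hsign hx0 hxy p.1 p.2
  have htsum_add : ∑' p : ℕ × ℕ, (H p + H p.swap)
      = (∑' p : ℕ × ℕ, H p) + ∑' p : ℕ × ℕ, H p.swap := Summable.tsum_add hHsum hHswap
  have hHpos : 0 < ∑' p : ℕ × ℕ, H p := by
    rw [htsum_add, hswap_eq] at hKpos; linarith
  have hsub : ∑' p : ℕ × ℕ, H p
      = (∑' p : ℕ × ℕ, (r (p.1 + 1) * y ^ (p.1 + 1)) * (s (p.2 + 1) * x ^ (p.2 + 1)))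
        - ∑' p : ℕ × ℕ, (r (p.1 + 1) * x ^ (p.1 + 1)) * (s (p.2 + 1) * y ^ (p.2 + 1)) :=
    Summable.tsum_sub hs2 hs1
  rw [h1, h2]
  rw [hsub] at hHpos
  linarith
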